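/- arXiv:math/0302088 — 3 statements merged into one kernel-verified Lean document; each statement's English description precedes it below -/
import Mathlib

section
/- The theta series Σ_{n ∈ ℤ^g} exp((iπ/k)·nᵗ τ n + 2iπ n·z) converges absolutely for every τ in the Siegel upper half-space (complex symmetric matrices with positive-definite imaginary part) and every z ∈ ℂ^g. -/
open Matrix Complex

/-!
Since `Im τ` is positive definite, compactness of the unit sphere gives `c > 0` with
`nᵗ (Im τ) n ≥ c ‖n‖²`. Hence the `n`-th term is bounded in norm by the product over the
coordinates of the one-variable Jacobi theta terms `‖exp(iπ (c/k) nᵢ² + 2iπ nᵢ zᵢ)‖`, and a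
product of absolutely summable series over `ℤ` is summable over `ℤ^g`.
-/

theorem summable_pi_prod_of_nonneg {ι : Type*} [Fintype ι] {κ : ι → Type*} {f : ∀ i, κ i → ℝ}
    (hf : ∀ i, 0 ≤ f i) (hs : ∀ i, Summable (f i)) :
    Summable fun x : (∀ i, κ i) => ∏ i, f i (x i) := by
  classical
  have hprod (x : ∀ i, κ i) : 0 ≤ ∏ i, f i (x i) := Finset.prod_nonneg fun i _ => hf i _
  refine summable_of_sum_le (c := ∏ i, ∑' j, f i j) hprod fun u => ?_
  calc ∑ x ∈ u, ∏ i, f i (x i)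
      ≤ ∑ x ∈ Fintype.piFinset fun i => u.image (· i), ∏ i, f i (x i) :=
        Finset.sum_le_sum_of_subset_of_nonneg
          (fun x hx => Fintype.mem_piFinset.2 fun i => Finset.mem_image_of_mem _ hx)
          fun x _ _ => hprod x
    _ = ∏ i, ∑ j ∈ u.image (· i), f i j := (Finset.prod_univ_sum _ _).symm
    _ ≤ ∏ i, ∑' j, f i j :=
        Finset.prod_le_prod (fun i _ => Finset.sum_nonneg fun j _ => hf i j)
          fun i _ => (hs i).sum_le_tsum _ fun j _ => hf i j

theorem exists_pos_mul_norm_sq_le_of_homogeneous {E : Type*} [NormedAddCommGroup E]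
    [NormedSpace ℝ E] [FiniteDimensional ℝ E] {Q : E → ℝ} (hQ : Continuous Q)
    (hsmul : ∀ (t : ℝ) x, Q (t • x) = t ^ 2 * Q x) (hpos : ∀ x ≠ 0, 0 < Q x) :
    ∃ c > 0, ∀ x, c * ‖x‖ ^ 2 ≤ Q x := by
  rcases subsingleton_or_nontrivial E with hE | hE
  · refine ⟨1, one_pos, fun x => ?_⟩
    have hQ0 : Q 0 = 0 := by simpa using hsmul 0 0
    simp [Subsingleton.elim x 0, hQ0]
  obtain ⟨u, hu, hmin⟩ := (isCompact_sphere (0 : E) 1).exists_isMinOn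
    (NormedSpace.sphere_nonempty.2 zero_le_one) hQ.continuousOn
  have hu1 : ‖u‖ = 1 := by simpa using hu
  refine ⟨Q u, hpos u (norm_ne_zero_iff.1 (by simp [hu1])), fun x => ?_⟩
  rcases eq_or_ne x 0 with rfl | hx
  · simpa using (hsmul 0 0).ge
  have hr : 0 < ‖x‖ := norm_pos_iff.2 hx
  have hunit : ‖x‖⁻¹ • x ∈ Metric.sphere (0 : E) 1 := by
    simp [norm_smul, hr.ne']
  calc Q u * ‖x‖ ^ 2 ≤ Q (‖x‖⁻¹ • x) * ‖x‖ ^ 2 := by gcongr; exact hmin hunit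
    _ = Q x := by rw [hsmul]; field_simp

theorem Matrix.PosDef.exists_pos_mul_sum_sq_le {ι : Type*} [Fintype ι]
    {A : Matrix ι ι ℝ} (hA : A.PosDef) :
    ∃ c > 0, ∀ x : ι → ℝ, c * ∑ i, x i ^ 2 ≤ x ⬝ᵥ A *ᵥ x := by
  obtain ⟨c, hc, hbound⟩ := exists_pos_mul_norm_sq_le_of_homogeneous
    (E := EuclideanSpace ℝ ι) (Q := fun x => x.ofLp ⬝ᵥ A *ᵥ x.ofLp)
    (by simp only [dotProduct, mulVec]; fun_prop)
    (fun t x => by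
      simp only [WithLp.ofLp_smul, mulVec_smul, smul_dotProduct, dotProduct_smul, smul_eq_mul]
      ring)
    (fun x hx => hA.dotProduct_mulVec_pos (by simpa using hx))
  refine ⟨c, hc, fun x => ?_⟩
  simpa [EuclideanSpace.norm_sq_eq] using hbound (WithLp.toLp 2 x)

theorem Complex.im_ofReal_dotProduct {ι : Type*} [Fintype ι] (x : ι → ℝ) (v : ι → ℂ) :
    ((fun i => (x i : ℂ)) ⬝ᵥ v).im = x ⬝ᵥ fun i => (v i).im := by
  simp [dotProduct, im_sum]

theorem Complex.im_mulVec_ofReal {ι : Type*} [Fintype ι] (A : Matrix ι ι ℂ) (x : ι → ℝ) :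
    (fun i => (A *ᵥ fun j => (x j : ℂ)) i |>.im) = A.map im *ᵥ x := by
  ext i
  simp [mulVec, dotProduct, im_sum]

theorem Complex.im_ofReal_dotProduct_mulVec_ofReal {ι : Type*} [Fintype ι] (A : Matrix ι ι ℂ)
    (x : ι → ℝ) :
    ((fun i => (x i : ℂ)) ⬝ᵥ A *ᵥ fun i => (x i : ℂ)).im = x ⬝ᵥ A.map im *ᵥ x := by
  rw [im_ofReal_dotProduct, im_mulVec_ofReal]

theorem re_theta_exponent (t : ℝ) (w v : ℂ) :
    (I * Real.pi / t * w + 2 * I * Real.pi * v).re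
      = -(Real.pi / t) * w.im - 2 * Real.pi * v.im := by
  rw [show I * Real.pi / t = ((Real.pi / t : ℝ) : ℂ) * I by push_cast; ring]
  simp [mul_re]
  ring

theorem norm_theta_summand_le_prod {ι : Type*} [Fintype ι] {t c : ℝ} (ht : 0 < t)
    (τ : Matrix ι ι ℂ) (z : ι → ℂ) (n : ι → ℤ)
    (hn : c * ∑ i, (n i : ℝ) ^ 2 ≤ (fun i => (n i : ℝ)) ⬝ᵥ τ.map im *ᵥ fun i => (n i : ℝ)) :
    ‖cexp (I * Real.pi / t * ((fun i => (n i : ℂ)) ⬝ᵥ τ *ᵥ fun i => (n i : ℂ))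
        + 2 * I * Real.pi * ((fun i => (n i : ℂ)) ⬝ᵥ z))‖
      ≤ ∏ i, ‖jacobiTheta₂_term (n i) (z i) (I * (c / t : ℝ))‖ := by
  have hcast : (fun i => (n i : ℂ)) = fun i => ((n i : ℝ) : ℂ) := by simp
  rw [norm_exp, re_theta_exponent, hcast, im_ofReal_dotProduct_mulVec_ofReal, im_ofReal_dotProduct]
  simp only [norm_jacobiTheta₂_term, ← Real.exp_sum, Real.exp_le_exp, I_mul_im, ofReal_re]
  have hsum : ∑ i, (-Real.pi * (n i : ℝ) ^ 2 * (c / t) - 2 * Real.pi * (n i) * (z i).im)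
      = -(Real.pi / t) * (c * ∑ i, (n i : ℝ) ^ 2)
        - 2 * Real.pi * ((fun i => (n i : ℝ)) ⬝ᵥ fun i => (z i).im) := by
    simp only [dotProduct, Finset.mul_sum, ← Finset.sum_sub_distrib]
    exact Finset.sum_congr rfl fun i _ => by ring
  rw [hsum]
  linear_combination mul_le_mul_of_nonneg_left hn (div_pos Real.pi_pos ht).le

theorem theta_series_summable_general (k g : ℕ) (hk : 1 ≤ k)
    (τ : Matrix (Fin g) (Fin g) ℂ)
    (hpos : (τ.map Complex.im).PosDef) (z : Fin g → ℂ) :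
    Summable (fun n : Fin g → ℤ =>
      Complex.exp ((Complex.I * Real.pi / k) *
          ((fun i => (n i : ℂ)) ⬝ᵥ τ.mulVec (fun i => (n i : ℂ)))
        + 2 * Complex.I * Real.pi * ((fun i => (n i : ℂ)) ⬝ᵥ z))) := by
  obtain ⟨c, hc, hbound⟩ := hpos.exists_pos_mul_sum_sq_le
  have hk_pos : (0 : ℝ) < k := by exact_mod_cast hk
  have hterm (i : Fin g) : Summable (jacobiTheta₂_term · (z i) (I * (c / k : ℝ))) :=
    (summable_jacobiTheta₂_term_iff _ _).2 (by simpa using div_pos hc hk_pos)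
  refine .of_norm_bounded
    (summable_pi_prod_of_nonneg (fun i _ => norm_nonneg _) fun i => (hterm i).norm) fun n => ?_
  simpa only [ofReal_natCast] using norm_theta_summand_le_prod hk_pos τ z n (hbound _)

/-- The theta series `Σ_{n ∈ ℤ^g} exp((iπ/k) nᵗτn + 2iπ n·z)` converges absolutely for
every `τ` in the Siegel upper half-space and every `z ∈ ℂ^g`. -/
theorem theta_series_summable (k g : ℕ) (hk : 1 ≤ k)
    (τ : Matrix (Fin g) (Fin g) ℂ) (hτ : τ.IsSymm)
    (hpos : (τ.map Complex.im).PosDef) (z : Fin g → ℂ) :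
    Summable (fun n : Fin g → ℤ =>
      Complex.exp ((Complex.I * Real.pi / k) *
          ((fun i => (n i : ℂ)) ⬝ᵥ τ.mulVec (fun i => (n i : ℂ)))
        + 2 * Complex.I * Real.pi * ((fun i => (n i : ℂ)) ⬝ᵥ z))) :=
  theta_series_summable_general k g hk τ hpos z
end

section
/- On the 𝔽₂-vector space 𝔽₂^{2g} with the standard symplectic form ω((x,y),(x′,y′)) = Σ(x_i y′_i + y_i x′_i), every quadratic refinement q (i.e. q(a+b) = q(a)+q(b)+ω(a,b)) is equivalent under the symplectic group Sp_{2g}(𝔽₂) to exactly one of the two standard forms q₀(x,y) = Σ x_i y_i or q₁(x,y) = Σ x_i y_i + x₁² + y₁², distinguished by the Arf invariant. -/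
/-- The 𝔽₂-symplectic vector space `𝔽₂^{2g}`. -/
abbrev SpinSpace (g : ℕ) := (Fin g → ZMod 2) × (Fin g → ZMod 2)

/-- The standard symplectic form `ω((x,y),(x',y')) = Σ (xᵢ y'ᵢ + yᵢ x'ᵢ)`. -/
def stdSymp (g : ℕ) (v w : SpinSpace g) : ZMod 2 :=
  ∑ i : Fin g, (v.1 i * w.2 i + v.2 i * w.1 i)

/-- The standard quadratic refinement with Arf invariant `0`: `q₀(x,y) = Σ xᵢ yᵢ`. -/
def q₀ (g : ℕ) (v : SpinSpace g) : ZMod 2 := ∑ i : Fin g, v.1 i * v.2 i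

/-- The standard quadratic refinement with Arf invariant `1`:
`q₁(x,y) = Σ xᵢ yᵢ + x₁² + y₁²`. -/
def q₁ (g : ℕ) (hg : 0 < g) (v : SpinSpace g) : ZMod 2 :=
  q₀ g v + v.1 ⟨0, hg⟩ * v.1 ⟨0, hg⟩ + v.2 ⟨0, hg⟩ * v.2 ⟨0, hg⟩

/-- The `i`-th standard symplectic basis vector `eᵢ`. -/
def eBasis (g : ℕ) (i : Fin g) : SpinSpace g := (Pi.single i 1, 0)

/-- The `i`-th standard symplectic basis vector `fᵢ`. -/
def fBasis (g : ℕ) (i : Fin g) : SpinSpace g := (0, Pi.single i 1)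

/-- The Arf invariant `Σ q(eᵢ) q(fᵢ)` of a quadratic refinement. -/
def arfInv (g : ℕ) (q : SpinSpace g → ZMod 2) : ZMod 2 :=
  ∑ i : Fin g, q (eBasis g i) * q (fBasis g i)

/-!
The difference of two quadratic refinements of a nondegenerate form `ω` over `𝔽₂` is additive,
hence linear, hence equal to `ω c` for some vector `c`. For the standard form this writes every
refinement as `q = q₀ + ω c` with `Arf q = q₀ c`, and more generally
`Arf (q + ω c) = Arf q + q c`. If `q = q' + ω c` and `q c = 0`, the symplectic transvection
`v ↦ v + ω(c, v) c` carries `q` to `q'`; so refinements with the same Arf invariant are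
equivalent. Conversely the Gauss sum `∑ v, (-1) ^ q v` is unchanged by any bijection and equals
`(-1) ^ Arf q * 2 ^ g`, so equivalent refinements have the same Arf invariant.
-/

theorem ZMod.eq_zero_or_eq_one (a : ZMod 2) : a = 0 ∨ a = 1 := by
  revert a; decide

section Transvection
variable {R V : Type*} [CommRing R] [AddCommGroup V] [Module R V] {B : LinearMap.BilinForm R V}

theorem LinearMap.BilinForm.IsAlt.apply_transvection (hB : B.IsAlt) (b x y : V) :
    B (LinearEquiv.transvection (hB.self_eq_zero b) x)
      (LinearEquiv.transvection (hB.self_eq_zero b) y) = B x y := by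
  simp only [LinearEquiv.transvection.apply, map_add, map_smul, LinearMap.add_apply,
    LinearMap.smul_apply, smul_eq_mul, hB.self_eq_zero]
  linear_combination -(B b y) * hB.neg_eq x b

end Transvection

theorem AddChar.map_sum_eq_prod {ι A M : Type*} [AddCommMonoid A] [CommMonoid M]
    (ψ : AddChar A M) (s : Finset ι) (f : ι → A) : ψ (∑ i ∈ s, f i) = ∏ i ∈ s, ψ (f i) := by
  classical
  induction s using Finset.induction_on with
  | empty => simp
  | insert i s hi ih =>
    rw [Finset.sum_insert hi, Finset.prod_insert hi, map_add_eq_mul, ih]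

def signChar : AddChar (ZMod 2) ℤ where
  toFun a := ((-1 : ℤˣ) ^ a : ℤˣ)
  map_zero_eq_one' := by simp
  map_add_eq_mul' a b := by simp [uzpow_add]

theorem signChar_one : signChar 1 = -1 := by simp [signChar]

theorem signChar_injective : Function.Injective signChar := by
  intro a b h
  rcases a.eq_zero_or_eq_one with rfl | rfl <;> rcases b.eq_zero_or_eq_one with rfl | rfl <;>
    simp [signChar_one] at h ⊢

def IsQuadraticRefinement {V : Type*} [AddCommGroup V] [Module (ZMod 2) V]
    (B : LinearMap.BilinForm (ZMod 2) V) (q : V → ZMod 2) : Prop :=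
  ∀ a b, q (a + b) = q a + q b + B a b

def quadraticGaussSum {V : Type*} [Fintype V] (q : V → ZMod 2) : ℤ := ∑ v, signChar (q v)

theorem quadraticGaussSum_congr {V : Type*} [Fintype V] {q q' : V → ZMod 2} (e : V ≃ V)
    (h : ∀ v, q (e v) = q' v) : quadraticGaussSum q' = quadraticGaussSum q := by
  simp only [quadraticGaussSum, ← h]
  exact Equiv.sum_comp e fun v => signChar (q v)

namespace IsQuadraticRefinement

variable {V : Type*} [AddCommGroup V] [Module (ZMod 2) V] {B : LinearMap.BilinForm (ZMod 2) V}
  {q q' : V → ZMod 2}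

theorem apply_zero (hq : IsQuadraticRefinement B q) : q 0 = 0 := by
  have h := hq 0 0
  rw [add_zero, LinearMap.map_zero₂, add_zero, left_eq_add] at h
  exact h

theorem apply_smul (hq : IsQuadraticRefinement B q) (s : ZMod 2) (v : V) :
    q (s • v) = s * q v := by
  rcases s.eq_zero_or_eq_one with rfl | rfl
  · simp [hq.apply_zero]
  · simp

theorem add_bilin (hq : IsQuadraticRefinement B q) (c : V) :
    IsQuadraticRefinement B (fun v => q v + B c v) := by
  intro a b
  simp only [hq a b, map_add]
  ring

theorem comp_transvection (hB : B.IsAlt) (hq : IsQuadraticRefinement B q) (b v : V) :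
    q (LinearEquiv.transvection (hB.self_eq_zero b) v) = q v + B b v * (q b + 1) := by
  have hsymm : B v b = B b v := by rw [← hB.neg_eq, CharTwo.neg_eq]
  rw [LinearEquiv.transvection.apply, hq, hq.apply_smul, map_smul, smul_eq_mul, hsymm]
  linear_combination ZMod.pow_card (B b v)

theorem exists_eq_add [FiniteDimensional (ZMod 2) V] (hB : B.Nondegenerate)
    (hq : IsQuadraticRefinement B q) (hq' : IsQuadraticRefinement B q') :
    ∃ c, ∀ v, q v = q' v + B c v := by
  let f : V →+ ZMod 2 := AddMonoidHom.mk' (fun v => q v - q' v) fun a b => by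
    rw [hq, hq']; ring
  refine ⟨(B.toDual hB).symm (f.toZModLinearMap 2), fun v => ?_⟩
  rw [LinearMap.BilinForm.apply_toDual_symm_apply]
  simp [f]

variable [Fintype V]

theorem quadraticGaussSum_add_bilin (hB : B.IsAlt) (hq : IsQuadraticRefinement B q) (c : V) :
    quadraticGaussSum (fun v => q v + B c v) = signChar (q c) * quadraticGaussSum q := by
  have hshift : ∀ v, q (v + c) + B c (v + c) = q v + q c := fun v => by
    rw [hq, map_add, hB.self_eq_zero, ← hB.neg_eq c v, CharTwo.neg_eq]
    linear_combination CharTwo.add_self_eq_zero (B c v)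
  rw [quadraticGaussSum, ← Equiv.sum_comp (Equiv.addRight c)]
  simp only [Equiv.coe_addRight, hshift, AddChar.map_add_eq_mul, quadraticGaussSum, Finset.mul_sum]
  exact Finset.sum_congr rfl fun v _ => mul_comm _ _

end IsQuadraticRefinement

section StandardSymplectic

variable {g : ℕ}

def stdSympForm (g : ℕ) : LinearMap.BilinForm (ZMod 2) (SpinSpace g) :=
  LinearMap.mk₂ (ZMod 2) (stdSymp g)
    (fun u v w => by simp only [stdSymp, ← Finset.sum_add_distrib]; congr 1; ext i; simp; ring)
    (fun s v w => by simp only [stdSymp, smul_eq_mul, Finset.mul_sum]; congr 1; ext i; simp; ring)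
    (fun u v w => by simp only [stdSymp, ← Finset.sum_add_distrib]; congr 1; ext i; simp; ring)
    (fun s v w => by simp only [stdSymp, smul_eq_mul, Finset.mul_sum]; congr 1; ext i; simp; ring)

theorem stdSympForm_apply (v w : SpinSpace g) : stdSympForm g v w = stdSymp g v w := rfl

theorem stdSymp_eBasis (c : SpinSpace g) (i : Fin g) : stdSymp g c (eBasis g i) = c.2 i := by
  simp [stdSymp, eBasis, Pi.single_apply]

theorem stdSymp_fBasis (c : SpinSpace g) (i : Fin g) : stdSymp g c (fBasis g i) = c.1 i := by
  simp [stdSymp, fBasis, Pi.single_apply]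

theorem stdSympForm_isAlt : (stdSympForm g).IsAlt := fun v => by
  simp only [stdSympForm, LinearMap.mk₂_apply, stdSymp]
  exact Finset.sum_eq_zero fun i _ => by rw [mul_comm]; exact CharTwo.add_self_eq_zero _

theorem stdSympForm_nondegenerate : (stdSympForm g).Nondegenerate := by
  refine (stdSympForm_isAlt.isRefl).nondegenerate_iff_separatingLeft.mpr fun c hc => ?_
  ext i
  · simpa [stdSympForm, stdSymp_fBasis] using hc (fBasis g i)
  · simpa [stdSympForm, stdSymp_eBasis] using hc (eBasis g i)

theorem isQuadraticRefinement_q₀ : IsQuadraticRefinement (stdSympForm g) (q₀ g) := by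
  intro a b
  simp only [stdSympForm, LinearMap.mk₂_apply, q₀, stdSymp, ← Finset.sum_add_distrib]
  congr 1; ext i; simp; ring

theorem q₁_eq_q₀_add (hg : 0 < g) (v : SpinSpace g) :
    q₁ g hg v = q₀ g v + stdSympForm g (eBasis g ⟨0, hg⟩ + fBasis g ⟨0, hg⟩) v := by
  have hsq (a : ZMod 2) : a * a = a := by rw [← sq]; exact ZMod.pow_card a
  rw [q₁, add_assoc, hsq, hsq, map_add, LinearMap.add_apply]
  simp [stdSympForm_apply, stdSymp, eBasis, fBasis, Pi.single_apply, add_comm]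

theorem isQuadraticRefinement_q₁ (hg : 0 < g) :
    IsQuadraticRefinement (stdSympForm g) (q₁ g hg) := by
  rw [funext (q₁_eq_q₀_add hg)]
  exact isQuadraticRefinement_q₀.add_bilin _

theorem arfInv_q₀_add (c : SpinSpace g) :
    arfInv g (fun v => q₀ g v + stdSympForm g c v) = q₀ g c := by
  have he (i : Fin g) : q₀ g (eBasis g i) = 0 := by simp [q₀, eBasis]
  have hf (i : Fin g) : q₀ g (fBasis g i) = 0 := by simp [q₀, fBasis]
  simp only [arfInv, he, hf, zero_add, stdSympForm_apply, stdSymp_eBasis, stdSymp_fBasis]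
  rw [q₀]
  exact Finset.sum_congr rfl fun i _ => mul_comm _ _

theorem arfInv_q₀ : arfInv g (q₀ g) = 0 := by
  simp [arfInv, q₀, eBasis]

theorem arfInv_q₁ (hg : 0 < g) : arfInv g (q₁ g hg) = 1 := by
  rw [funext (q₁_eq_q₀_add hg), arfInv_q₀_add]
  simp [q₀, eBasis, fBasis, Pi.single_apply]

theorem quadraticGaussSum_q₀ : quadraticGaussSum (q₀ g) = 2 ^ g := by
  have h2 : ∑ p : ZMod 2 × ZMod 2, signChar (p.1 * p.2) = 2 := by
    have huniv : (Finset.univ : Finset (ZMod 2)) = {0, 1} := rfl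
    simp [Fintype.sum_prod_type, huniv, signChar_one]
  unfold quadraticGaussSum q₀
  rw [← (Equiv.arrowProdEquivProdArrow (Fin g) (fun _ => ZMod 2) (fun _ => ZMod 2)).sum_comp]
  simp only [Equiv.arrowProdEquivProdArrow, Equiv.coe_fn_mk, AddChar.map_sum_eq_prod]
  rw [← Fintype.prod_sum (fun (_ : Fin g) (p : ZMod 2 × ZMod 2) => signChar (p.1 * p.2)), h2]
  simp

end StandardSymplectic

namespace IsQuadraticRefinement

variable {g : ℕ} {q q' : SpinSpace g → ZMod 2}

theorem exists_eq_q₀_add (hq : IsQuadraticRefinement (stdSympForm g) q) :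
    ∃ c, q = fun v => q₀ g v + stdSympForm g c v := by
  obtain ⟨c, hc⟩ := hq.exists_eq_add stdSympForm_nondegenerate isQuadraticRefinement_q₀
  exact ⟨c, funext hc⟩

theorem arfInv_add_bilin (hq : IsQuadraticRefinement (stdSympForm g) q) (c : SpinSpace g) :
    arfInv g (fun v => q v + stdSympForm g c v) = arfInv g q + q c := by
  obtain ⟨d, rfl⟩ := hq.exists_eq_q₀_add
  have hshift : (fun v => q₀ g v + stdSympForm g d v + stdSympForm g c v) =
      fun v => q₀ g v + stdSympForm g (d + c) v := by
    funext v; rw [map_add, LinearMap.add_apply, add_assoc]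
  rw [hshift, arfInv_q₀_add, arfInv_q₀_add, isQuadraticRefinement_q₀, add_assoc]

theorem quadraticGaussSum_eq (hq : IsQuadraticRefinement (stdSympForm g) q) :
    quadraticGaussSum q = signChar (arfInv g q) * 2 ^ g := by
  obtain ⟨c, rfl⟩ := hq.exists_eq_q₀_add
  rw [isQuadraticRefinement_q₀.quadraticGaussSum_add_bilin stdSympForm_isAlt, arfInv_q₀_add,
    quadraticGaussSum_q₀]

theorem arfInv_eq_of_comp (hq : IsQuadraticRefinement (stdSympForm g) q)
    (hq' : IsQuadraticRefinement (stdSympForm g) q') (e : SpinSpace g ≃ SpinSpace g)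
    (h : ∀ v, q (e v) = q' v) : arfInv g q = arfInv g q' := by
  have hS := quadraticGaussSum_congr e h
  rw [hq.quadraticGaussSum_eq, hq'.quadraticGaussSum_eq] at hS
  exact signChar_injective (mul_right_cancel₀ (by positivity) hS).symm

theorem exists_symplectic_comp_eq_iff (hq : IsQuadraticRefinement (stdSympForm g) q)
    (hq' : IsQuadraticRefinement (stdSympForm g) q') :
    (∃ A : SpinSpace g ≃ₗ[ZMod 2] SpinSpace g,
        (∀ x y, stdSympForm g (A x) (A y) = stdSympForm g x y) ∧ ∀ v, q (A v) = q' v) ↔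
      arfInv g q = arfInv g q' := by
  refine ⟨fun ⟨A, _, hA⟩ => hq.arfInv_eq_of_comp hq' A.toEquiv hA, fun h => ?_⟩
  obtain ⟨c, hc⟩ := hq.exists_eq_add stdSympForm_nondegenerate hq'
  have hqc : q c = 0 := by
    have := hq'.arfInv_add_bilin c
    rw [← funext hc, h, left_eq_add] at this
    rw [hc, stdSympForm_isAlt.self_eq_zero, add_zero, this]
  refine ⟨LinearEquiv.transvection (stdSympForm_isAlt.self_eq_zero c),
    stdSympForm_isAlt.apply_transvection c, fun v => ?_⟩
  rw [hq.comp_transvection stdSympForm_isAlt, hqc, zero_add, mul_one, hc, add_assoc,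
    CharTwo.add_self_eq_zero, add_zero]

end IsQuadraticRefinement

/-- Every quadratic refinement of the standard symplectic form on `𝔽₂^{2g}` is
equivalent under `Sp_{2g}(𝔽₂)` to exactly one of the two standard forms `q₀`, `q₁`,
the two cases being distinguished by the Arf invariant. -/
theorem quadratic_refinement_classification (g : ℕ) (hg : 0 < g)
    (q : SpinSpace g → ZMod 2)
    (hq : ∀ a b : SpinSpace g, q (a + b) = q a + q b + stdSymp g a b) :
    ((∃ A : SpinSpace g ≃ₗ[ZMod 2] SpinSpace g,
        (∀ x y, stdSymp g (A x) (A y) = stdSymp g x y) ∧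
        ((∀ v, q (A v) = q₀ g v) ∨ (∀ v, q (A v) = q₁ g hg v))) ∧
      ¬((∃ A : SpinSpace g ≃ₗ[ZMod 2] SpinSpace g,
            (∀ x y, stdSymp g (A x) (A y) = stdSymp g x y) ∧ ∀ v, q (A v) = q₀ g v) ∧
        (∃ A : SpinSpace g ≃ₗ[ZMod 2] SpinSpace g,
            (∀ x y, stdSymp g (A x) (A y) = stdSymp g x y) ∧ ∀ v, q (A v) = q₁ g hg v))) ∧
    ((∃ A : SpinSpace g ≃ₗ[ZMod 2] SpinSpace g,
        (∀ x y, stdSymp g (A x) (A y) = stdSymp g x y) ∧ ∀ v, q (A v) = q₀ g v) ↔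
      arfInv g q = 0) := by
  have hq : IsQuadraticRefinement (stdSympForm g) q := hq
  have h₀ := hq.exists_symplectic_comp_eq_iff isQuadraticRefinement_q₀
  have h₁ := hq.exists_symplectic_comp_eq_iff (isQuadraticRefinement_q₁ hg)
  rw [arfInv_q₀] at h₀
  rw [arfInv_q₁] at h₁
  refine ⟨⟨?_, ?_⟩, h₀⟩
  · rcases (arfInv g q).eq_zero_or_eq_one with h | h
    · obtain ⟨A, hA, hqA⟩ := h₀.mpr h
      exact ⟨A, hA, Or.inl hqA⟩
    · obtain ⟨A, hA, hqA⟩ := h₁.mpr h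
      exact ⟨A, hA, Or.inr hqA⟩
  · rintro ⟨hA₀, hA₁⟩
    exact zero_ne_one ((h₀.mp hA₀).symm.trans (h₁.mp hA₁))
end

section
/- Let ρ: G → GL(V) be a finite-dimensional complex representation of a finite Heisenberg group G (a central extension 0 → Z → G → A → 0 with Z cyclic central and the commutator pairing A × A → Z nondegenerate) in which the center Z acts by a faithful character. Then ρ is irreducible if and only if dim V equals √|A|. -/
open LinearMap Module
open scoped commutatorElement

section Aux

variable {G : Type*} [Group G] [Finite G]
  {Z : Subgroup G}
  {V : Type*} [AddCommGroup V] [Module ℂ V] [FiniteDimensional ℂ V] [Nontrivial V]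
  {ρ : Representation ℂ G V} {χ : Z →* ℂˣ}

lemma svn_trace_central (hcent : ∀ z : Z, ρ (z : G) = (χ z : ℂ) • LinearMap.id)
    (z : Z) : trace ℂ V (ρ (z : G)) = (χ z : ℂ) * (finrank ℂ V : ℂ) := by
  rw [hcent z, map_smul, trace_id]; rfl

/-- the character vanishes off the center -/
lemma svn_trace_vanish (hcomm : ∀ a b : G, ⁅a, b⁆ ∈ Z)
    (hnd : ∀ a : G, (∀ b : G, ⁅a, b⁆ = 1) → a ∈ Z)
    (hχ : Function.Injective χ)
    (hcent : ∀ z : Z, ρ (z : G) = (χ z : ℂ) • LinearMap.id)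
    {g : G} (hg : g ∉ Z) : trace ℂ V (ρ g) = 0 := by
  obtain ⟨b, hb⟩ : ∃ b : G, ⁅g, b⁆ ≠ 1 := by
    by_contra h
    push_neg at h
    exact hg (hnd g h)
  have hzZ : ⁅b, g⁆ ∈ Z := hcomm b g
  set z : Z := ⟨⁅b, g⁆, hzZ⟩ with hzdef
  have hz1 : z ≠ 1 := by
    intro h
    apply hb
    have h' : ⁅b, g⁆ = 1 := congrArg Subtype.val h
    rw [← commutatorElement_inv, h', inv_one]
  have hkey : b * g * b⁻¹ = (z : G) * g := by
    simp [hzdef, commutatorElement_def, mul_assoc]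
  have h1 : ρ b * ρ g * ρ b⁻¹ = (χ z : ℂ) • ρ g := by
    rw [← map_mul, ← map_mul, hkey, map_mul, hcent z]
    ext v
    simp
  have h2 : trace ℂ V (ρ b * ρ g * ρ b⁻¹) = trace ℂ V (ρ g) := by
    rw [trace_mul_comm, ← mul_assoc, ← map_mul, inv_mul_cancel, map_one, one_mul]
  rw [h1, map_smul] at h2
  have hχz : (χ z : ℂ) ≠ 1 := by
    intro h
    apply hz1
    apply hχ
    rw [map_one]
    ext
    exact h
  have h3 : ((χ z : ℂ) - 1) * trace ℂ V (ρ g) = 0 := by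
    rw [sub_one_mul, ← smul_eq_mul, h2, sub_self]
  rcases mul_eq_zero.mp h3 with h | h
  · exact absurd (sub_eq_zero.mp h) hχz
  · exact h

end Aux

section More
variable {G : Type*} [Group G] [Finite G]
  {Z : Subgroup G}
  {V : Type*} [AddCommGroup V] [Module ℂ V] [FiniteDimensional ℂ V] [Nontrivial V]
  {ρ : Representation ℂ G V} {χ : Z →* ℂˣ}

/-- Schur's lemma -/
lemma svn_schur
    (hirr : ∀ U : Submodule ℂ V, (∀ (g : G) (v : V), v ∈ U → ρ g v ∈ U) → U = ⊥ ∨ U = ⊤)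
    (f : Module.End ℂ V) (hf : ∀ g : G, ρ g * f = f * ρ g) :
    (finrank ℂ V : ℂ) • f = trace ℂ V f • 1 := by
  obtain ⟨c, hc⟩ := Module.End.exists_eigenvalue f
  have hU : ∀ (g : G) (v : V), v ∈ f.eigenspace c → ρ g v ∈ f.eigenspace c := by
    intro g v hv
    rw [Module.End.mem_eigenspace_iff] at hv ⊢
    have : f (ρ g v) = ρ g (f v) := by
      have := congrArg (fun t : Module.End ℂ V => t v) (hf g)
      simpa using this.symm
    rw [this, hv, map_smul]
  rcases hirr _ hU with h | h
  · exact absurd h (Module.End.hasEigenvalue_iff.mp hc)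
  · have hfc : f = c • 1 := by
      ext v
      have hv : v ∈ f.eigenspace c := h ▸ Submodule.mem_top
      rw [Module.End.mem_eigenspace_iff] at hv
      simpa using hv
    rw [hfc, map_smul, trace_one, smul_smul, smul_eq_mul, mul_comm]

lemma svn_avg [Fintype G]
    (hirr : ∀ U : Submodule ℂ V, (∀ (g : G) (v : V), v ∈ U → ρ g v ∈ U) → U = ⊥ ∨ U = ⊤)
    (A : Module.End ℂ V) :
    (finrank ℂ V : ℂ) • (∑ g : G, ρ g * A * ρ g⁻¹) =
      ((Fintype.card G : ℂ) * trace ℂ V A) • 1 := by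
  set S : Module.End ℂ V := ∑ g : G, ρ g * A * ρ g⁻¹ with hS
  have hcommS : ∀ h : G, ρ h * S = S * ρ h := by
    intro h
    rw [hS, Finset.mul_sum, Finset.sum_mul]
    refine Fintype.sum_equiv (Equiv.mulLeft h) _ _ fun g => ?_
    have l1 : ρ h * (ρ g * A * ρ g⁻¹) = ρ (h * g) * A * ρ g⁻¹ := by
      rw [map_mul]; noncomm_ring
    have l2 : ρ (h * g) * A * ρ (h * g)⁻¹ * ρ h = ρ (h * g) * A * ρ g⁻¹ := by
      rw [mul_assoc (ρ (h*g) * A), ← map_mul]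
      congr 2
      group
    rw [l1, Equiv.coe_mulLeft, l2]
  have htr : trace ℂ V S = (Fintype.card G : ℂ) * trace ℂ V A := by
    rw [hS, map_sum]
    have : ∀ g : G, trace ℂ V (ρ g * A * ρ g⁻¹) = trace ℂ V A := by
      intro g
      rw [trace_mul_comm, ← mul_assoc, ← map_mul]
      simp
    simp [this, Finset.sum_const]
  rw [← htr]
  exact svn_schur hirr S hcommS

lemma svn_trB {ι : Type*} [Fintype ι] [DecidableEq ι] (b : Basis ι ℂ V)
    (f : Module.End ℂ V) : trace ℂ V f = ∑ i, b.repr (f (b i)) i := by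
  rw [trace_eq_matrix_trace ℂ b f, Matrix.trace]
  simp [Matrix.diag, LinearMap.toMatrix_apply]

lemma svn_pair [Fintype G]
    (hirr : ∀ U : Submodule ℂ V, (∀ (g : G) (v : V), v ∈ U → ρ g v ∈ U) → U = ⊥ ∨ U = ⊤)
    {ι : Type*} [Fintype ι] [DecidableEq ι] (b : Basis ι ℂ V) (i j : ι) :
    (finrank ℂ V : ℂ) * ∑ g : G, b.repr (ρ g (b i)) i * b.repr (ρ g⁻¹ (b j)) j
      = if i = j then (Fintype.card G : ℂ) else 0 := by
  set A : Module.End ℂ V := (b.coord j).smulRight (b i) with hAdef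
  have hA : ∀ x : V, A x = b.repr x j • b i := fun x => rfl
  have htrA : trace ℂ V A = if i = j then 1 else 0 := by
    rw [svn_trB b A]
    simp only [hA, map_smul, Basis.repr_self, Finsupp.smul_apply, Finsupp.single_apply,
      smul_eq_mul]
    simp [Finset.sum_ite_eq, Finset.mem_univ, mul_comm]
  have h2 := congrArg (fun f : Module.End ℂ V => b.repr (f (b j)) i) (svn_avg hirr A)
  simp only [LinearMap.smul_apply, LinearMap.sum_apply, Module.End.one_apply,
    Module.End.mul_apply, hA, map_smul, Finsupp.smul_apply, smul_eq_mul, map_sum,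
    Finsupp.finset_sum_apply, htrA, Module.Basis.repr_self, Finsupp.single_apply] at h2
  rw [Finset.mul_sum]
  rw [Finset.mul_sum] at h2
  calc (∑ g : G, (finrank ℂ V : ℂ) * (b.repr (ρ g (b i)) i * b.repr (ρ g⁻¹ (b j)) j))
      = ∑ g : G, (finrank ℂ V : ℂ) * (b.repr (ρ g⁻¹ (b j)) j * b.repr (ρ g (b i)) i) := by
        simp_rw [mul_comm (b.repr _ i)]
    _ = if i = j then (Fintype.card G : ℂ) else 0 := by
        rw [h2]
        by_cases hij : i = j <;> simp [hij]

lemma svn_sum_sq [Fintype G]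
    (hirr : ∀ U : Submodule ℂ V, (∀ (g : G) (v : V), v ∈ U → ρ g v ∈ U) → U = ⊥ ∨ U = ⊤) :
    ∑ g : G, trace ℂ V (ρ g) * trace ℂ V (ρ g⁻¹) = (Fintype.card G : ℂ) := by
  classical
  set d := finrank ℂ V with hd
  let b : Basis (Fin d) ℂ V := Module.finBasis ℂ V
  have hdc : (d : ℂ) ≠ 0 := Nat.cast_ne_zero.mpr Module.finrank_pos.ne'
  apply mul_left_cancel₀ hdc
  have e1 : ∑ g : G, trace ℂ V (ρ g) * trace ℂ V (ρ g⁻¹)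
      = ∑ i, ∑ j, ∑ g : G, b.repr (ρ g (b i)) i * b.repr (ρ g⁻¹ (b j)) j := by
    simp_rw [svn_trB b, Finset.sum_mul_sum]
    rw [Finset.sum_comm]
    exact Finset.sum_congr rfl fun i _ => Finset.sum_comm
  rw [e1]
  simp_rw [Finset.mul_sum]
  calc ∑ i, ∑ j, ∑ g : G, (d:ℂ) * (b.repr (ρ g (b i)) i * b.repr (ρ g⁻¹ (b j)) j)
      = ∑ i : Fin d, ∑ j : Fin d, if i = j then (Fintype.card G : ℂ) else 0 := by
        refine Finset.sum_congr rfl fun i _ => Finset.sum_congr rfl fun j _ => ?_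
        rw [← Finset.mul_sum]
        exact svn_pair hirr b i j
    _ = ∑ _i : Fin d, (Fintype.card G : ℂ) := by
        refine Finset.sum_congr rfl fun i _ => ?_
        simp
    _ = (d : ℂ) * (Fintype.card G : ℂ) := by
        simp [Finset.sum_const, mul_comm]

lemma svn_sum_sq_Z [Fintype G] (hcomm : ∀ a b : G, ⁅a, b⁆ ∈ Z)
    (hnd : ∀ a : G, (∀ b : G, ⁅a, b⁆ = 1) → a ∈ Z)
    (hχ : Function.Injective χ)
    (hcent : ∀ z : Z, ρ (z : G) = (χ z : ℂ) • LinearMap.id) :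
    ∑ g : G, trace ℂ V (ρ g) * trace ℂ V (ρ g⁻¹)
      = (Nat.card Z : ℂ) * (finrank ℂ V : ℂ) ^ 2 := by
  classical
  have hterm : ∀ g : G, trace ℂ V (ρ g) * trace ℂ V (ρ g⁻¹)
      = if g ∈ Z then (finrank ℂ V : ℂ) ^ 2 else 0 := by
    intro g
    by_cases hg : g ∈ Z
    · rw [if_pos hg]
      have t1 := svn_trace_central hcent ⟨g, hg⟩
      have t2 := svn_trace_central hcent ⟨g, hg⟩⁻¹
      have hcoe : ((⟨g, hg⟩⁻¹ : Z) : G) = g⁻¹ := rfl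
      rw [hcoe] at t2
      rw [t1, t2, map_inv, Units.val_inv_eq_inv_val]
      have hne : (χ ⟨g, hg⟩ : ℂ) ≠ 0 := Units.ne_zero _
      field_simp
    · rw [if_neg hg, svn_trace_vanish hcomm hnd hχ hcent hg, zero_mul]
  simp_rw [hterm]
  rw [Finset.sum_ite, Finset.sum_const, Finset.sum_const_zero, add_zero, nsmul_eq_mul]
  congr 1
  rw [Nat.card_eq_fintype_card]
  norm_cast
  exact (Fintype.card_subtype _).symm

lemma svn_reverse [Fintype G] (hZc : Z ≤ Subgroup.center G)
    (hcomm : ∀ a b : G, ⁅a, b⁆ ∈ Z)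
    (hnd : ∀ a : G, (∀ b : G, ⁅a, b⁆ = 1) → a ∈ Z)
    (hχ : Function.Injective χ)
    (hcent : ∀ z : Z, ρ (z : G) = (χ z : ℂ) • LinearMap.id)
    (hd : finrank ℂ V ^ 2 = Nat.card (G ⧸ Z)) :
    ∀ U : Submodule ℂ V, (∀ (g : G) (v : V), v ∈ U → ρ g v ∈ U) → U = ⊥ ∨ U = ⊤ := by
  classical
  letI : Fintype (G ⧸ Z) := Fintype.ofFinite _
  set f : G ⧸ Z → Module.End ℂ V := fun q => ρ q.out with hf
  have hdpos : (finrank ℂ V : ℂ) ≠ 0 := Nat.cast_ne_zero.mpr Module.finrank_pos.ne'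
  -- linear independence
  have hlin : LinearIndependent ℂ f := by
    rw [Fintype.linearIndependent_iff]
    intro c hc s
    have h0 := congrArg
      (fun t : Module.End ℂ V => trace ℂ V (t * ρ (Quotient.out s)⁻¹)) hc
    simp only [Finset.sum_mul, smul_mul_assoc, map_sum, map_smul, zero_mul, map_zero,
      smul_eq_mul] at h0
    rw [Finset.sum_eq_single s] at h0
    · have h1 : ρ (Quotient.out s) * ρ (Quotient.out s)⁻¹ = 1 := by
        rw [← map_mul]
        simp
      rw [hf] at h0
      simp only [h1, trace_one] at h0
      rcases mul_eq_zero.mp h0 with h | h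
      · exact h
      · exact absurd h hdpos
    · intro q _ hqs
      have hnotZ : Quotient.out q * (Quotient.out s)⁻¹ ∉ Z := by
        intro hmem
        apply hqs
        have hcz : Quotient.out s * (Quotient.out q * (Quotient.out s)⁻¹)
            = (Quotient.out q * (Quotient.out s)⁻¹) * Quotient.out s :=
          Subgroup.mem_center_iff.mp (hZc hmem) _
        have h2 : (Quotient.out s)⁻¹ * Quotient.out q ∈ Z := by
          have hq : Quotient.out q
              = Quotient.out s * (Quotient.out q * (Quotient.out s)⁻¹) := by
            rw [hcz]; group
          have : (Quotient.out s)⁻¹ * Quotient.out q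
              = Quotient.out q * (Quotient.out s)⁻¹ := by
            conv_lhs => rw [hq]
            group
          rw [this]; exact hmem
        have h3 : (QuotientGroup.mk (Quotient.out s) : G ⧸ Z)
            = QuotientGroup.mk (Quotient.out q) := QuotientGroup.eq.mpr h2
        rw [QuotientGroup.out_eq', QuotientGroup.out_eq'] at h3
        exact h3.symm
      rw [hf]
      simp only [← map_mul]
      rw [svn_trace_vanish hcomm hnd hχ hcent hnotZ, mul_zero]
    · intro h
      exact absurd (Finset.mem_univ s) h
  -- span is everything
  set W : Submodule ℂ (Module.End ℂ V) := Submodule.span ℂ (Set.range f) with hW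
  have hEnd : finrank ℂ (Module.End ℂ V) = finrank ℂ V * finrank ℂ V :=
    Module.finrank_linearMap (R := ℂ) (S := ℂ) (M := V) (N := V)
  have hWtop : W = ⊤ := by
    apply Submodule.eq_top_of_finrank_eq
    rw [finrank_span_eq_card hlin, hEnd, ← pow_two, hd, Nat.card_eq_fintype_card]
  have hmem : ∀ g : G, ρ g ∈ W := by
    intro g
    have h2 : (Quotient.out (QuotientGroup.mk g : G ⧸ Z))⁻¹ * g ∈ Z :=
      QuotientGroup.eq.mp (QuotientGroup.out_eq' _)
    set z : Z := ⟨_, h2⟩ with hz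
    have hg : g = Quotient.out (QuotientGroup.mk g : G ⧸ Z) * (z : G) := by
      simp [hz]
    have h3 : ρ g = (χ z : ℂ) • f (QuotientGroup.mk g) := by
      conv_lhs => rw [hg]
      rw [map_mul, hcent z, hf]
      ext v
      simp
    rw [h3]
    exact Submodule.smul_mem _ _ (Submodule.subset_span (Set.mem_range_self _))
  -- conclude
  intro U hU
  by_cases hbot : U = ⊥
  · exact Or.inl hbot
  · right
    obtain ⟨u, huU, hu0⟩ := (Submodule.ne_bot_iff U).mp hbot
    have hall : ∀ fE : Module.End ℂ V, fE u ∈ U := by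
      have hle : W ≤ U.comap (LinearMap.applyₗ u) := by
        rw [hW, Submodule.span_le]
        rintro _ ⟨q, rfl⟩
        exact hU _ u huU
      intro fE
      exact hle (hWtop ▸ Submodule.mem_top)
    rw [Submodule.eq_top_iff']
    intro v
    obtain ⟨φ, hφ⟩ := (LinearMap.toSpanSingleton ℂ V u).exists_leftInverse_of_injective
      (LinearMap.ker_toSpanSingleton (R := ℂ) (M := V) hu0)
    have hφu : φ u = 1 := by
      have := congrArg (fun t : ℂ →ₗ[ℂ] ℂ => t 1) hφ
      simpa [LinearMap.toSpanSingleton] using this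
    have := hall (φ.smulRight v)
    simpa [hφu] using this

end More



/-- Stone–von Neumann for finite Heisenberg groups: a representation of a finite
Heisenberg group `G` (central extension `0 → Z → G → A → 0` with `Z` cyclic central and
nondegenerate commutator pairing) on which the center acts by a faithful character is
irreducible if and only if `dim V = √|A|`, i.e. `(dim V)² = |A|`. -/
theorem heisenberg_irreducible_iff (G : Type*) [Group G] [Finite G]
    (Z : Subgroup G) [IsCyclic Z] (hZc : Z ≤ Subgroup.center G)
    (hcomm : ∀ a b : G, ⁅a, b⁆ ∈ Z)
    (hnd : ∀ a : G, (∀ b : G, ⁅a, b⁆ = 1) → a ∈ Z)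
    (V : Type*) [AddCommGroup V] [Module ℂ V] [FiniteDimensional ℂ V] [Nontrivial V]
    (ρ : Representation ℂ G V)
    (χ : Z →* ℂˣ) (hχ : Function.Injective χ)
    (hcent : ∀ z : Z, ρ (z : G) = (χ z : ℂ) • LinearMap.id) :
    (∀ U : Submodule ℂ V, (∀ (g : G) (v : V), v ∈ U → ρ g v ∈ U) → U = ⊥ ∨ U = ⊤) ↔
      Module.finrank ℂ V ^ 2 = Nat.card (G ⧸ Z) := by
  letI : Fintype G := Fintype.ofFinite G
  constructor
  · intro hirr
    have h1 := svn_sum_sq hirr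
    have h2 := svn_sum_sq_Z hcomm hnd hχ hcent
    have hG : (Fintype.card G : ℂ) = (Nat.card (G ⧸ Z) : ℂ) * (Nat.card Z : ℂ) := by
      rw [← Nat.card_eq_fintype_card, Subgroup.card_eq_card_quotient_mul_card_subgroup Z]
      push_cast
      ring
    have hZ0 : (Nat.card Z : ℂ) ≠ 0 := Nat.cast_ne_zero.mpr Nat.card_pos.ne'
    have h3 : (Nat.card Z : ℂ) * (Module.finrank ℂ V : ℂ) ^ 2
        = (Nat.card Z : ℂ) * (Nat.card (G ⧸ Z) : ℂ) := by
      rw [← h2, h1, hG]; ring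
    have h4 := mul_left_cancel₀ hZ0 h3
    exact_mod_cast h4
  · exact svn_reverse hZc hcomm hnd hχ hcent
end
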